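/- arXiv:1501.01290 — 2 statements merged into one kernel-verified Lean document; each statement's English description precedes it below -/
import Mathlib

section
/- (Kato intertwining) Let H(s) be a C¹ family of bounded self-adjoint operators with a C¹ family of orthogonal projections P₀(s) commuting with H(s) (P₀(s)H(s) = H(s)P₀(s)). Let U_K(t) solve i dU_K/dt = K(t)U_K(t), U_K(0) = I, where K(t) = H(εt) + iε[Ṗ₀(εt), P₀(εt)]. Then P₀(εt)U_K(t) = U_K(t)P₀(0) for all t ≥ 0. -/
open ContinuousLinearMap

/-!
Differentiating `P² = P` gives `Ṗ = P Ṗ + Ṗ P`, hence `P Ṗ P = 0` and `[[Ṗ, P], P] = Ṗ`. Since `H`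
commutes with `P`, the generator `K = H + iε[Ṗ, P]` therefore satisfies `[K, P(εt)] = iε Ṗ(εt)`,
which is exactly what makes the intertwining defect `W t = P(εt) U(t) - U(t) P(0)` solve the same
equation `i Ẇ = K W` as `U`. As `K` is self-adjoint, `W* W` is conserved, and `W 0 = 0` forces
`W = 0` by the C*-identity.
-/

section Idempotent

variable {R : Type*} [Ring R] {p d : R}

theorem IsIdempotentElem.mul_mul_self_eq_zero (hp : IsIdempotentElem p)
    (hd : d = p * d + d * p) : p * d * p = 0 := by
  have h := congrArg (p * ·) hd
  simp only [mul_add, ← mul_assoc, hp.eq] at h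
  exact left_eq_add.mp h

theorem IsIdempotentElem.commutator_commutator_eq (hp : IsIdempotentElem p)
    (hd : d = p * d + d * p) : (d * p - p * d) * p - p * (d * p - p * d) = d := by
  have hpdp := hp.mul_mul_self_eq_zero hd
  calc (d * p - p * d) * p - p * (d * p - p * d)
      = d * (p * p) - p * d * p - p * d * p + p * p * d := by noncomm_ring
    _ = d := by rw [hp.eq, hpdp, sub_zero, sub_zero, add_comm, ← hd]

theorem IsIdempotentElem.add_smul_commutator_commutator_eq {𝕜 : Type*} [CommRing 𝕜]
    [Algebra 𝕜 R] {h : R} (hp : IsIdempotentElem p) (hd : d = p * d + d * p) (hh : p * h = h * p)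
    (c : 𝕜) : (h + c • (d * p - p * d)) * p - p * (h + c • (d * p - p * d)) = c • d := by
  rw [add_mul, mul_add, smul_mul_assoc, mul_smul_comm, hh, add_sub_add_left_eq_sub, ← smul_sub,
    hp.commutator_commutator_eq hd]

end Idempotent

theorem IsSelfAdjoint.I_mul_smul_commutator {A : Type*} [Ring A] [StarRing A] [Module ℂ A]
    [StarModule ℂ A] {a b : A} (ha : IsSelfAdjoint a) (hb : IsSelfAdjoint b) (r : ℝ) :
    IsSelfAdjoint ((Complex.I * r) • (a * b - b * a)) := by
  simp only [IsSelfAdjoint, star_smul, star_sub, star_mul, ha.star_eq, hb.star_eq,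
    Complex.star_def, Complex.conj_I, Complex.conj_ofReal]
  rw [mul_neg, mul_comm, neg_smul, ← smul_neg, neg_sub]

theorem HasDerivAt.eq_mul_add_mul_of_isIdempotentElem {𝔸 : Type*} [NormedRing 𝔸]
    [NormedAlgebra ℝ 𝔸] {P : ℝ → 𝔸} {P' : 𝔸} {s : ℝ} (hP : ∀ u, IsIdempotentElem (P u))
    (hd : HasDerivAt P P' s) : P' = P s * P' + P' * P s := by
  have hsq : HasDerivAt (fun u => P u * P u) (P' * P s + P s * P') s := hd.mul hd
  simp only [fun u => (hP u).eq] at hsq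
  exact (hd.unique hsq).trans (add_comm _ _)

theorem HasDerivAt.isSelfAdjoint {F : Type*} [NormedAddCommGroup F] [NormedSpace ℝ F]
    [StarAddMonoid F] [StarModule ℝ F] [ContinuousStar F] {f : ℝ → F} {f' : F} {s : ℝ}
    (hf : ∀ u, IsSelfAdjoint (f u)) (hd : HasDerivAt f f' s) : IsSelfAdjoint f' := by
  have hstar := hd.star
  simp only [fun u => (hf u).star_eq] at hstar
  exact (hd.unique hstar).symm

theorem HasDerivAt.mul_sub_mul_const {A : Type*} [NormedRing A] [NormedAlgebra ℂ A] {Q U : ℝ → A}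
    {Q' K : A} {t : ℝ} (hQ : HasDerivAt Q Q' t) (hU : HasDerivAt U (-Complex.I • (K * U t)) t)
    (hKQ : K * Q t - Q t * K = Complex.I • Q') (B : A) :
    HasDerivAt (fun u => Q u * U u - U u * B) (-Complex.I • (K * (Q t * U t - U t * B))) t := by
  refine ((hQ.mul hU).sub (hU.mul_const B)).congr_deriv ?_
  have hKQ' : K * Q t = Q t * K + Complex.I • Q' := by rw [← hKQ]; abel
  rw [mul_sub, ← mul_assoc, ← mul_assoc, hKQ', add_mul, smul_sub, smul_add, smul_mul_assoc,
    smul_mul_assoc, smul_smul, neg_mul, Complex.I_mul_I, neg_neg, one_smul, mul_smul_comm,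
    mul_assoc (Q t)]
  abel

theorem eq_zero_of_hasDerivAt_eq_neg_I_smul_mul {A : Type*} [CStarAlgebra A] {K W : ℝ → A}
    (hK : ∀ t, IsSelfAdjoint (K t)) (hW : ∀ t, HasDerivAt W (-Complex.I • (K t * W t)) t)
    (hW0 : W 0 = 0) (t : ℝ) : W t = 0 := by
  have hconserved : ∀ u, HasDerivAt (fun v => star (W v) * W v) 0 u := by
    intro u
    have h := (hW u).star.mul (hW u)
    have hzero : star (-Complex.I • (K u * W u)) * W u
        + star (W u) * (-Complex.I • (K u * W u)) = 0 := by
      simp [star_mul, (hK u).star_eq, mul_assoc]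
    rwa [hzero] at h
  have hconst := is_const_of_deriv_eq_zero (fun u => (hconserved u).differentiableAt)
    (fun u => (hconserved u).deriv) t 0
  rw [← CStarRing.star_mul_self_eq_zero_iff]
  simpa [hW0] using hconst

theorem kato_intertwining_general
    {E : Type*} [NormedAddCommGroup E] [InnerProductSpace ℂ E] [CompleteSpace E]
    (ε : ℝ)
    (H P P' : ℝ → E →L[ℂ] E)
    (hHsa : ∀ s, IsSelfAdjoint (H s))
    (hPsa : ∀ s, IsSelfAdjoint (P s))
    (hPproj : ∀ s, P s ∘L P s = P s)
    (hPderiv : ∀ s, HasDerivAt P (P' s) s)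
    (hcomm : ∀ s, P s ∘L H s = H s ∘L P s)
    (K : ℝ → E →L[ℂ] E)
    (hK : ∀ t, K t = H (ε * t) +
      (Complex.I * (ε : ℂ)) • (P' (ε * t) ∘L P (ε * t) - P (ε * t) ∘L P' (ε * t)))
    (UK : ℝ → E →L[ℂ] E) (hUK0 : UK 0 = 1)
    (hUK : ∀ t, HasDerivAt UK (-Complex.I • (K t ∘L UK t)) t) :
    ∀ t ≥ (0 : ℝ), P (ε * t) ∘L UK t = UK t ∘L P 0 := by
  simp only [← ContinuousLinearMap.mul_def] at hPproj hcomm hK hUK ⊢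
  have hPidem : ∀ s, IsIdempotentElem (P s) := hPproj
  have hLeibniz : ∀ s, P' s = P s * P' s + P' s * P s := fun s =>
    (hPderiv s).eq_mul_add_mul_of_isIdempotentElem hPidem
  have hKsa : ∀ t, IsSelfAdjoint (K t) := fun t => hK t ▸
    (hHsa _).add ((hPderiv _).isSelfAdjoint hPsa |>.I_mul_smul_commutator (hPsa _) ε)
  have hKP : ∀ t, K t * P (ε * t) - P (ε * t) * K t = Complex.I • (ε • P' (ε * t)) := by
    intro t
    rw [hK, (hPidem _).add_smul_commutator_commutator_eq (hLeibniz _) (hcomm _), mul_smul,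
      Complex.coe_smul]
  have hPε : ∀ t, HasDerivAt (fun u => P (ε * u)) (ε • P' (ε * t)) t := fun t => by
    have h := (hPderiv (ε * t)).scomp t ((hasDerivAt_id' t).const_mul ε)
    rwa [mul_one] at h
  have hdefect := fun t => (hPε t).mul_sub_mul_const (hUK t) (hKP t) (P 0)
  intro t _
  exact sub_eq_zero.mp (eq_zero_of_hasDerivAt_eq_neg_I_smul_mul hKsa hdefect (by simp [hUK0]) t)

/-- **Kato intertwining.** Let `H(s)` be a `C¹` family of bounded
self-adjoint operators with a `C¹` family of orthogonal projections `P₀(s)` commuting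
with `H(s)`, and let `U_K` solve `i dU_K/dt = K(t) U_K(t)`, `U_K(0) = 1`, with
`K(t) = H(εt) + iε[Ṗ₀(εt), P₀(εt)]`.  Then `P₀(εt) U_K(t) = U_K(t) P₀(0)` for `t ≥ 0`. -/
theorem kato_intertwining
    {E : Type*} [NormedAddCommGroup E] [InnerProductSpace ℂ E] [CompleteSpace E]
    (ε : ℝ) (hε : 0 < ε)
    (H P P' : ℝ → E →L[ℂ] E)
    (hHcont : Continuous H) (hP'cont : Continuous P')
    (hHsa : ∀ s, IsSelfAdjoint (H s))
    (hPsa : ∀ s, IsSelfAdjoint (P s))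
    (hPproj : ∀ s, P s ∘L P s = P s)
    (hPderiv : ∀ s, HasDerivAt P (P' s) s)
    (hcomm : ∀ s, P s ∘L H s = H s ∘L P s)
    (K : ℝ → E →L[ℂ] E)
    (hK : ∀ t, K t = H (ε * t) +
      (Complex.I * (ε : ℂ)) • (P' (ε * t) ∘L P (ε * t) - P (ε * t) ∘L P' (ε * t)))
    (UK : ℝ → E →L[ℂ] E) (hUK0 : UK 0 = 1)
    (hUK : ∀ t, HasDerivAt UK (-Complex.I • (K t ∘L UK t)) t) :
    ∀ t ≥ (0 : ℝ), P (ε * t) ∘L UK t = UK t ∘L P 0 :=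
  kato_intertwining_general ε H P P' hHsa hPsa hPproj hPderiv hcomm K hK UK hUK0 hUK
end

section
/- (Duhamel stability of local decay) Let U⁰(t,s) be a propagator on L²(ℝⁿ) satisfying the weighted decay ‖⟨x⟩^{-σ}U⁰(t,s)⟨x⟩^{-σ}‖_{L²→L²} ≤ C_{σ,2}⟨t−s⟩^{-α} with α > 1, and let W_ε(x,t) satisfy sup_t ‖⟨x⟩^{2σ}W_ε(·,t)‖_{L^∞} ≤ C₀ε. Let U(t) solve i∂_tψ = (H₀(t)+W_ε)ψ, i.e. the Duhamel equation ψ(t) = U⁰(t,0)ψ₀ − i∫₀^t U⁰(t,s)W_ε(·,s)ψ(s)ds. If ‖⟨x⟩^{-σ}U⁰(t,0)ψ₀‖ ≤ C_{σ,2}⟨t⟩^{-α}, then for ε small enough (depending only on C₀, C_{σ,2}, α) one has ‖⟨x⟩^{-σ}U(t)ψ₀‖_{L²} ≤ C⟨t⟩^{-α} for all t ≥ 0. -/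
/-!
By Duhamel's formula the weighted norm `g t = ‖⟨x⟩^{-σ} ψ t‖` satisfies the Volterra inequality
`g t ≤ Cσ ⟨t⟩^{-α} + Cσ C₀ ε ∫₀^t ⟨t-s⟩^{-α} g s ds`. For `α > 1` the convolution of
`⟨·⟩^{-α}` with itself is `≤ K ⟨t⟩^{-α}`, so the maximum `S` of `⟨s⟩^α g s` over `[0, t]`
obeys `S ≤ Cσ + Cσ C₀ ε K S`, which bounds `S` as soon as `Cσ C₀ ε K < 1`.
-/

open ContinuousLinearMap intervalIntegral

open MeasureTheory Set

/-- `⟨t⟩^{-α}`, where `⟨t⟩ = (1 + t²)^{1/2}`. -/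
noncomputable def decayWeight (α t : ℝ) : ℝ := (1 + t ^ 2) ^ (-(α / 2))

lemma decayWeight_pos (α t : ℝ) : 0 < decayWeight α t :=
  Real.rpow_pos_of_pos (by positivity) _

lemma continuous_decayWeight (α : ℝ) : Continuous (decayWeight α) :=
  (continuous_const.add (continuous_pow 2)).rpow_const fun t =>
    Or.inl (by simp only [Pi.add_apply]; positivity)

lemma integrable_decayWeight {α : ℝ} (hα : 1 < α) : Integrable (decayWeight α) := by
  have h := integrable_rpow_neg_one_add_norm_sq (E := ℝ) (μ := volume) (r := α)
    (by simpa using hα)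
  refine h.congr (Filter.Eventually.of_forall fun t => ?_)
  simp [decayWeight, neg_div]

lemma integral_decayWeight_pos {α : ℝ} (hα : 1 < α) : 0 < ∫ t, decayWeight α t := by
  rw [integral_pos_iff_support_of_nonneg (fun t => (decayWeight_pos α t).le)
    (integrable_decayWeight hα), Function.support_eq_univ fun t => (decayWeight_pos α t).ne']
  simp

lemma integral_decayWeight_le {α T : ℝ} (hα : 1 < α) (hT : 0 ≤ T) :
    ∫ s in (0 : ℝ)..T, decayWeight α s ≤ ∫ s, decayWeight α s := by
  rw [integral_of_le hT]
  exact setIntegral_le_integral (integrable_decayWeight hα)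
    (Filter.Eventually.of_forall fun s => (decayWeight_pos α s).le)

/-- Since `⟨t⟩ ≤ 2⟨u⟩` when `|t| ≤ 2|u|`. -/
lemma decayWeight_le_of_abs_le {α t u : ℝ} (hα : 0 ≤ α) (h : |t| ≤ 2 * |u|) :
    decayWeight α u ≤ 2 ^ α * decayWeight α t := by
  have hsq : 1 + t ^ 2 ≤ 4 * (1 + u ^ 2) := by
    have := sq_le_sq' (by linarith [abs_nonneg t]) h
    rw [sq_abs, mul_pow, sq_abs] at this
    linarith
  have h4 : (4 : ℝ) ^ (-(α / 2)) = (2 ^ α)⁻¹ := by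
    rw [show (4 : ℝ) = 2 ^ (2 : ℝ) by norm_num, ← Real.rpow_mul (by norm_num),
      ← Real.rpow_neg (by norm_num)]
    ring_nf
  have key : (4 : ℝ) ^ (-(α / 2)) * decayWeight α u ≤ decayWeight α t := by
    rw [decayWeight, decayWeight, ← Real.mul_rpow (by norm_num) (by positivity)]
    exact Real.rpow_le_rpow_of_nonpos (by positivity) hsq (by linarith)
  rw [h4, inv_mul_le_iff₀ (by positivity)] at key
  exact key

lemma decayWeight_sub_mul_le {α s t : ℝ} (hα : 0 ≤ α) (hs : s ∈ Icc 0 t) :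
    decayWeight α (t - s) * decayWeight α s ≤
      2 ^ α * decayWeight α t * (decayWeight α s + decayWeight α (t - s)) := by
  have hw_s := decayWeight_pos α s
  have hw_ts := decayWeight_pos α (t - s)
  rcases le_total t (2 * s) with h | h
  · have := decayWeight_le_of_abs_le (t := t) (u := s) hα
      (by rw [abs_of_nonneg (hs.1.trans hs.2), abs_of_nonneg hs.1]; exact h)
    nlinarith
  · have := decayWeight_le_of_abs_le (t := t) (u := t - s) hα
      (by rw [abs_of_nonneg (hs.1.trans hs.2), abs_of_nonneg (sub_nonneg.2 hs.2)]; linarith)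
    nlinarith

/-- On `[0, t]` one of `s`, `t - s` is at least `t / 2`. -/
lemma integral_decayWeight_conv_le {α t : ℝ} (hα : 1 < α) (ht : 0 ≤ t) :
    ∫ s in (0 : ℝ)..t, decayWeight α (t - s) * decayWeight α s ≤
      (2 * 2 ^ α * ∫ s, decayWeight α s) * decayWeight α t := by
  have hw := continuous_decayWeight α
  have hw_sub : Continuous fun s => decayWeight α (t - s) := hw.comp (continuous_sub_left t)
  have hreflect :
      ∫ s in (0 : ℝ)..t, decayWeight α (t - s) = ∫ s in (0 : ℝ)..t, decayWeight α s := by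
    simp [integral_comp_sub_left]
  calc ∫ s in (0 : ℝ)..t, decayWeight α (t - s) * decayWeight α s
      ≤ ∫ s in (0 : ℝ)..t, 2 ^ α * decayWeight α t * (decayWeight α s + decayWeight α (t - s)) :=
        integral_mono_on ht ((hw_sub.mul hw).intervalIntegrable _ _)
          ((continuous_const.mul (hw.add hw_sub)).intervalIntegrable _ _)
          fun s hs => decayWeight_sub_mul_le (by linarith) hs
    _ = 2 ^ α * decayWeight α t * (2 * ∫ s in (0 : ℝ)..t, decayWeight α s) := by
        rw [intervalIntegral.integral_const_mul,
          integral_add (hw.intervalIntegrable _ _) (hw_sub.intervalIntegrable _ _),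
          hreflect, two_mul]
    _ ≤ 2 ^ α * decayWeight α t * (2 * ∫ s, decayWeight α s) := by
        have := integral_decayWeight_le hα ht
        have := decayWeight_pos α t
        gcongr
    _ = (2 * 2 ^ α * ∫ s, decayWeight α s) * decayWeight α t := by ring

theorem le_mul_of_volterra_le {w k g : ℝ → ℝ} {A B K t : ℝ}
    (hw : Continuous w) (hw_pos : ∀ s, 0 < w s) (hk : Continuous k) (hk_nonneg : ∀ s, 0 ≤ k s)
    (hconv : ∀ t, 0 ≤ t → ∫ s in (0 : ℝ)..t, k (t - s) * w s ≤ K * w t)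
    (hB : 0 ≤ B) (hBK : B * K < 1) (hg : Continuous g) (hg_nonneg : ∀ s, 0 ≤ g s)
    (hg_le : ∀ t, 0 ≤ t → g t ≤ A * w t + B * ∫ s in (0 : ℝ)..t, k (t - s) * g s)
    (ht : 0 ≤ t) : g t ≤ A / (1 - B * K) * w t := by
  obtain ⟨t₁, ht₁, hmax⟩ := isCompact_Icc.exists_isMaxOn (nonempty_Icc.2 ht)
    (hg.div hw fun s => (hw_pos s).ne').continuousOn
  set S := g t₁ / w t₁
  have hS_nonneg : 0 ≤ S := div_nonneg (hg_nonneg t₁) (hw_pos t₁).le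
  have hg_le_S : ∀ s ∈ Icc 0 t, g s ≤ S * w s := fun s hs =>
    (div_le_iff₀ (hw_pos s)).1 (hmax hs)
  have hk_sub : Continuous fun s => k (t₁ - s) := hk.comp (continuous_sub_left t₁)
  have hg_t₁ : g t₁ ≤ (A + B * K * S) * w t₁ :=
    calc g t₁ ≤ A * w t₁ + B * ∫ s in (0 : ℝ)..t₁, k (t₁ - s) * g s := hg_le t₁ ht₁.1
      _ ≤ A * w t₁ + B * ∫ s in (0 : ℝ)..t₁, S * (k (t₁ - s) * w s) := by
          gcongr
          refine integral_mono_on ht₁.1 ((hk_sub.mul hg).intervalIntegrable _ _)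
            ((continuous_const.mul (hk_sub.mul hw)).intervalIntegrable _ _) fun s hs => ?_
          rw [mul_left_comm]
          exact mul_le_mul_of_nonneg_left (hg_le_S s ⟨hs.1, hs.2.trans ht₁.2⟩) (hk_nonneg _)
      _ = A * w t₁ + B * S * ∫ s in (0 : ℝ)..t₁, k (t₁ - s) * w s := by
          rw [intervalIntegral.integral_const_mul, mul_assoc]
      _ ≤ A * w t₁ + B * S * (K * w t₁) := by
          gcongr
          exact hconv t₁ ht₁.1
      _ = (A + B * K * S) * w t₁ := by ring
  have hS : S ≤ A / (1 - B * K) := by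
    rw [le_div_iff₀ (by linarith)]
    linarith [(div_le_iff₀ (hw_pos t₁)).2 hg_t₁]
  calc g t = g t / w t * w t := (div_mul_cancel₀ _ (hw_pos t).ne').symm
    _ ≤ A / (1 - B * K) * w t :=
        mul_le_mul_of_nonneg_right ((hmax (right_mem_Icc.2 ht)).trans hS) (hw_pos t).le

section Duhamel

variable {E : Type*} [NormedAddCommGroup E] [NormedSpace ℂ E] [CompleteSpace E]
  {U0 : ℝ → ℝ → E →L[ℂ] E} {X : E →L[ℂ] E} {M : ℝ → E →L[ℂ] E} {ψ : ℝ → E} {ψ₀ : E}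
  {α Cσ m t : ℝ}

lemma norm_weighted_duhamel_le (hU0 : Continuous fun p : ℝ × ℝ => U0 p.1 p.2)
    (hM : Continuous M) (hψ : Continuous ψ) (hM_le : ∀ s, ‖M s‖ ≤ m)
    (hXU : ∀ t s : ℝ, 0 ≤ s → s ≤ t → ‖X ∘L U0 t s ∘L X‖ ≤ Cσ * decayWeight α (t - s))
    (hXU0 : ‖X (U0 t 0 ψ₀)‖ ≤ Cσ * decayWeight α t)
    (hduh : ψ t =
      U0 t 0 ψ₀ - Complex.I • ∫ s in (0 : ℝ)..t, U0 t s ((X ∘L M s ∘L X) (ψ s)))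
    (ht : 0 ≤ t) :
    ‖X (ψ t)‖ ≤
      Cσ * decayWeight α t + Cσ * m * ∫ s in (0 : ℝ)..t, decayWeight α (t - s) * ‖X (ψ s)‖ := by
  have hXψ : Continuous fun s => X (ψ s) := X.continuous.comp hψ
  have hF : Continuous fun s => U0 t s ((X ∘L M s ∘L X) (ψ s)) :=
    (hU0.comp (continuous_const.prodMk continuous_id)).clm_apply
      (X.continuous.comp (hM.clm_apply hXψ))
  have hpoint : ∀ s ∈ Icc 0 t, ‖X (U0 t s ((X ∘L M s ∘L X) (ψ s)))‖ ≤
      Cσ * m * (decayWeight α (t - s) * ‖X (ψ s)‖) := fun s hs =>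
    calc ‖(X ∘L U0 t s ∘L X) (M s (X (ψ s)))‖
        ≤ ‖X ∘L U0 t s ∘L X‖ * (‖M s‖ * ‖X (ψ s)‖) :=
          (le_opNorm _ _).trans (mul_le_mul_of_nonneg_left (le_opNorm _ _) (norm_nonneg _))
      _ ≤ Cσ * decayWeight α (t - s) * (m * ‖X (ψ s)‖) := by
          gcongr
          · exact (norm_nonneg _).trans (hXU t s hs.1 hs.2)
          · exact hXU t s hs.1 hs.2
          · exact hM_le s
      _ = Cσ * m * (decayWeight α (t - s) * ‖X (ψ s)‖) := by ring
  calc ‖X (ψ t)‖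
      ≤ ‖X (U0 t 0 ψ₀)‖ + ‖∫ s in (0 : ℝ)..t, X (U0 t s ((X ∘L M s ∘L X) (ψ s)))‖ := by
        rw [hduh, map_sub, map_smul, ← X.intervalIntegral_comp_comm (hF.intervalIntegrable _ _)]
        refine (norm_sub_le _ _).trans_eq ?_
        rw [norm_smul, Complex.norm_I, one_mul]
    _ ≤ Cσ * decayWeight α t +
          ∫ s in (0 : ℝ)..t, Cσ * m * (decayWeight α (t - s) * ‖X (ψ s)‖) := by
        gcongr
        refine (intervalIntegral.norm_integral_le_integral_norm ht).trans (integral_mono_on ht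
          ((X.continuous.comp hF).norm.intervalIntegrable _ _) ?_ hpoint)
        exact (continuous_const.mul (((continuous_decayWeight α).comp
          (continuous_sub_left t)).mul hXψ.norm)).intervalIntegrable _ _
    _ = Cσ * decayWeight α t +
          Cσ * m * ∫ s in (0 : ℝ)..t, decayWeight α (t - s) * ‖X (ψ s)‖ := by
        rw [intervalIntegral.integral_const_mul]

end Duhamel

/-- **Duhamel stability of local decay.** Let `U⁰(t,s)` be a propagator
with weighted decay `‖⟨x⟩^{-σ}U⁰(t,s)⟨x⟩^{-σ}‖ ≤ C_{σ,2}⟨t−s⟩^{-α}`, `α > 1` (`X` stands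
for `⟨x⟩^{-σ}`), and let `W_ε(t) = X M(t) X` with `‖M(t)‖ ≤ C₀ ε` (i.e.
`‖⟨x⟩^{2σ}W_ε‖_∞ ≤ C₀ε`).  If `ψ` solves the Duhamel equation
`ψ(t) = U⁰(t,0)ψ₀ − i∫₀^t U⁰(t,s)W_ε(s)ψ(s)ds` and `‖X U⁰(t,0)ψ₀‖ ≤ C_{σ,2}⟨t⟩^{-α}`,
then for `ε` small enough (depending only on `C₀, C_{σ,2}, α`) one has
`‖X ψ(t)‖ ≤ C⟨t⟩^{-α}` for all `t ≥ 0`. -/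
theorem duhamel_local_decay_stability
    {E : Type*} [NormedAddCommGroup E] [InnerProductSpace ℂ E] [CompleteSpace E]
    (C₀ Cσ α : ℝ) (hC₀ : 0 < C₀) (hCσ : 0 < Cσ) (hα : 1 < α) :
    ∃ ε₀ > 0, ∀ ε : ℝ, 0 < ε → ε < ε₀ →
      ∀ (U0 : ℝ → ℝ → E →L[ℂ] E) (X : E →L[ℂ] E) (M W : ℝ → E →L[ℂ] E)
        (ψ : ℝ → E) (ψ₀ : E),
        Continuous (fun p : ℝ × ℝ => U0 p.1 p.2) → Continuous M → Continuous ψ →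
        (∀ s, W s = X ∘L M s ∘L X) →
        (∀ s, ‖M s‖ ≤ C₀ * ε) →
        (∀ t s : ℝ, 0 ≤ s → s ≤ t →
          ‖X ∘L U0 t s ∘L X‖ ≤ Cσ * (1 + (t - s) ^ 2) ^ (-(α / 2))) →
        (∀ t ≥ (0 : ℝ), ‖X (U0 t 0 ψ₀)‖ ≤ Cσ * (1 + t ^ 2) ^ (-(α / 2))) →
        (∀ t ≥ (0 : ℝ),
          ψ t = U0 t 0 ψ₀ - Complex.I • ∫ s in (0 : ℝ)..t, U0 t s (W s (ψ s))) →
        ∃ C : ℝ, ∀ t ≥ (0 : ℝ), ‖X (ψ t)‖ ≤ C * (1 + t ^ 2) ^ (-(α / 2)) := by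
  set K := 2 * 2 ^ α * ∫ s, decayWeight α s
  have hK : 0 < K := by have := integral_decayWeight_pos hα; positivity
  refine ⟨1 / (Cσ * C₀ * K), by positivity, fun ε hε hε₀ U0 X M W ψ ψ₀ hU0 hM hψ hW hM_le hXU
    hXU0 hduh => ?_⟩
  obtain rfl : W = fun s => X ∘L M s ∘L X := funext hW
  have hBK : Cσ * (C₀ * ε) * K < 1 := by
    rw [lt_div_iff₀ (by positivity)] at hε₀
    linarith
  refine ⟨Cσ / (1 - Cσ * (C₀ * ε) * K), fun t ht => ?_⟩
  have hw := continuous_decayWeight α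
  exact le_mul_of_volterra_le hw (decayWeight_pos α) hw (fun s => (decayWeight_pos α s).le)
    (fun t ht => integral_decayWeight_conv_le hα ht) (by positivity) hBK
    (X.continuous.comp hψ).norm (fun _ => norm_nonneg _)
    (fun t ht => norm_weighted_duhamel_le hU0 hM hψ hM_le hXU (hXU0 t ht) (hduh t ht) ht) ht
end
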